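/- Suppose the sequence (p_j)_{j≥1} does not converge to 1. Then for each of the Banach spaces Ω ∈ { c_0, l^α for 1 ≤ α < ∞ }, the point spectrum of the transition operator S acting on Ω is empty: there is no λ ∈ ℂ and nonzero v ∈ Ω with S v = λ v. -/

import Mathlib

/-!
An eigenvector `v` of `S` is determined by `v 0`: the eigen-equation at `n` expresses
`p_1 ⋯ p_{ζ_n} v(n+1)` through `v n` and the values `v (n - (q_r - 1))`, `r < ζ_n`. The function
`v_λ(n) = ∏_r ι_λ(r) ^ a_r(n)` solves all these equations, so `v = v 0 • v_λ`, and in particular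
`v (q_r) = v 0 · ι_λ(r + 1)`. If `v` vanishes at infinity and `v 0 ≠ 0`, then `ι_λ(r) → 0`; since
`ftil_r(λ) = ι_λ(r) ^ d_r` and `1 - p_{r+1} = ftil_r(λ) - p_{r+1} ι_λ(r + 1)`, this forces `p_r → 1`.
-/

open Filter Finset
open scoped ENNReal Topology ZeroAtInfty

noncomputable section

namespace AMFC

/-- `q d j = d 0 * d 1 * ... * d j`. -/
def q (d : ℕ → ℕ) (j : ℕ) : ℕ := ∏ i ∈ Finset.range (j + 1), d i

/-- For `j ≥ 1`, `digit d n j = ⌊n / q_{j-1}⌋ mod d_j` is the `j`-th digit of `n`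
in the Cantor system of numeration. -/
def digit (d : ℕ → ℕ) (n j : ℕ) : ℕ := (n / q d (j - 1)) % d j

/-- The counter `ζ_n = min { j ≥ 1 : a_j(n) ≠ d_j - 1 }`. -/
def zeta (d : ℕ → ℕ) (n : ℕ) : ℕ := sInf {j | 1 ≤ j ∧ digit d n j ≠ d j - 1}

open scoped Classical in
/-- The transition probabilities of the stochastic adding machine. -/
def s (d : ℕ → ℕ) (p : ℕ → ℝ) (n m : ℕ) : ℝ :=
  if m = n + 1 then ∏ j ∈ Finset.Icc 1 (zeta d n), p j
  else if m = n then 1 - p 1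
  else if h : ∃ r, 1 ≤ r ∧ r + 1 ≤ zeta d n ∧
      n = m + ∑ j ∈ Finset.Icc 1 r, (d j - 1) * q d (j - 1)
    then (1 - p (h.choose + 1)) * ∏ j ∈ Finset.Icc 1 h.choose, p j
  else 0

/-- `f j (z) = ((z - (1 - p j)) / p j) ^ (d j)`. -/
def f (d : ℕ → ℕ) (p : ℕ → ℝ) (j : ℕ) (z : ℂ) : ℂ :=
  ((z - (1 - (p j : ℂ))) / (p j : ℂ)) ^ d j

/-- `ftil j = f j ∘ ... ∘ f 1`, with `ftil 0 = id`. -/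
def ftil (d : ℕ → ℕ) (p : ℕ → ℝ) : ℕ → ℂ → ℂ
  | 0 => id
  | j + 1 => f d p (j + 1) ∘ ftil d p j

/-- The fibered filled Julia set `E = {z : limsup_j |ftil j z| < ∞}`. -/
def E (d : ℕ → ℕ) (p : ℕ → ℝ) : Set ℂ :=
  {z | Filter.limsup (fun j => (‖ftil d p j z‖₊ : ℝ≥0∞)) Filter.atTop < ⊤}

/-- `ι_λ(r) = (ftil (r-1) λ - (1 - p r)) / p r` for `r ≥ 1`. -/
def iota (d : ℕ → ℕ) (p : ℕ → ℝ) (lam : ℂ) (r : ℕ) : ℂ :=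
  (ftil d p (r - 1) lam - (1 - (p r : ℂ))) / (p r : ℂ)

/-- `v_λ(n) = ∏_{r ≥ 1} ι_λ(r) ^ a_r(n)`, a finite product. -/
def vlam (d : ℕ → ℕ) (p : ℕ → ℝ) (lam : ℂ) (n : ℕ) : ℂ :=
  ∏ᶠ r : ℕ, iota d p lam (r + 1) ^ digit d n (r + 1)

/-- The point spectrum of a continuous linear operator. -/
def pointSpectrum {M : Type*} [NormedAddCommGroup M] [NormedSpace ℂ M]
    (T : M →L[ℂ] M) : Set ℂ :=
  {lam | ∃ v, v ≠ 0 ∧ T v = lam • v}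

/-- The residual spectrum: `T - λI` is injective but its range is not dense. -/
def residualSpectrum {M : Type*} [NormedAddCommGroup M] [NormedSpace ℂ M]
    (T : M →L[ℂ] M) : Set ℂ :=
  {lam | Function.Injective ⇑(T - lam • (1 : M →L[ℂ] M)) ∧
    ¬ DenseRange ⇑(T - lam • (1 : M →L[ℂ] M))}

/-- The continuous spectrum: `T - λI` is injective with dense range, but not surjective. -/
def continuousSpectrum {M : Type*} [NormedAddCommGroup M] [NormedSpace ℂ M]
    (T : M →L[ℂ] M) : Set ℂ :=
  {lam | Function.Injective ⇑(T - lam • (1 : M →L[ℂ] M)) ∧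
    DenseRange ⇑(T - lam • (1 : M →L[ℂ] M)) ∧
    Set.range ⇑(T - lam • (1 : M →L[ℂ] M)) ≠ Set.univ}

theorem _root_.Memℓp.tendsto_norm_cofinite_zero {ι : Type*} {E : ι → Type*}
    [∀ i, NormedAddCommGroup (E i)] {α : ℝ≥0∞} {f : ∀ i, E i} (hf : Memℓp f α)
    (hα0 : α ≠ 0) (hα : α ≠ ⊤) : Tendsto (fun i => ‖f i‖) cofinite (𝓝 0) := by
  have hpos : 0 < α.toReal := ENNReal.toReal_pos hα0 hα
  have h := (hf.summable hpos).tendsto_cofinite_zero.rpow_const (p := α.toReal⁻¹)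
    (Or.inr (inv_nonneg.mpr hpos.le))
  rw [Real.zero_rpow (inv_ne_zero hpos.ne')] at h
  refine h.congr fun i => ?_
  rw [← Real.rpow_mul (norm_nonneg _), mul_inv_cancel₀ hpos.ne', Real.rpow_one]

lemma q_succ (d : ℕ → ℕ) (j : ℕ) : q d (j + 1) = q d j * d (j + 1) :=
  prod_range_succ d (j + 1)

lemma q_eq_mul_prod_Ico (d : ℕ → ℕ) {i j : ℕ} (h : i ≤ j) :
    q d j = q d i * ∏ k ∈ Ico (i + 1) (j + 1), d k := by
  rw [q, q, prod_range_mul_prod_Ico d (Nat.succ_le_succ h)]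

lemma digit_eq_zero_of_lt {d : ℕ → ℕ} {n j : ℕ} (h : n < q d (j - 1)) :
    digit d n j = 0 := by
  rw [digit, Nat.div_eq_of_lt h, Nat.zero_mod]

lemma digit_of_lt_zeta {d : ℕ → ℕ} {n j : ℕ} (hj : 1 ≤ j) (h : j < zeta d n) :
    digit d n j = d j - 1 := by
  by_contra hne
  exact (Nat.sInf_le ⟨hj, hne⟩ : zeta d n ≤ j).not_gt h

structure IsCantorBase (d : ℕ → ℕ) : Prop where
  zero : d 0 = 1
  two_le : ∀ j, 1 ≤ j → 2 ≤ d j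

namespace IsCantorBase

variable {d : ℕ → ℕ}

theorem d_pos (hd : IsCantorBase d) (j : ℕ) : 0 < d j := by
  rcases Nat.eq_zero_or_pos j with rfl | hj
  · simp [hd.zero]
  · exact lt_of_lt_of_le two_pos (hd.two_le j hj)

theorem q_zero (hd : IsCantorBase d) : q d 0 = 1 := by simp [q, hd.zero]

theorem q_pos (hd : IsCantorBase d) (j : ℕ) : 0 < q d j :=
  prod_pos fun i _ => hd.d_pos i

theorem q_strictMono (hd : IsCantorBase d) : StrictMono (q d) :=
  strictMono_nat_of_lt_succ fun j => by
    have := hd.two_le (j + 1) j.succ_pos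
    have := hd.q_pos j
    rw [q_succ]
    nlinarith

theorem lt_q_self (hd : IsCantorBase d) (n : ℕ) : n < q d n := by
  induction n with
  | zero => simp [hd.q_zero]
  | succ n ih => exact lt_of_le_of_lt (Nat.succ_le_of_lt ih) (hd.q_strictMono n.lt_succ_self)

theorem digit_self_succ_ne (hd : IsCantorBase d) (n : ℕ) :
    digit d n (n + 1) ≠ d (n + 1) - 1 := by
  rw [digit_eq_zero_of_lt (hd.lt_q_self n)]
  have := hd.two_le (n + 1) n.succ_pos
  omega

theorem zeta_mem (hd : IsCantorBase d) (n : ℕ) :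
    1 ≤ zeta d n ∧ digit d n (zeta d n) ≠ d (zeta d n) - 1 :=
  Nat.sInf_mem (s := {j | 1 ≤ j ∧ digit d n j ≠ d j - 1})
    ⟨n + 1, n.succ_pos, hd.digit_self_succ_ne n⟩

theorem zeta_le_succ (hd : IsCantorBase d) (n : ℕ) : zeta d n ≤ n + 1 :=
  Nat.sInf_le ⟨n.succ_pos, hd.digit_self_succ_ne n⟩

theorem mod_q_of_lt_zeta (hd : IsCantorBase d) {n k : ℕ} (h : k < zeta d n) :
    n % q d k = q d k - 1 := by
  induction k with
  | zero => simp [hd.q_zero, Nat.mod_one]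
  | succ k ih =>
    have hdig : n / q d k % d (k + 1) = d (k + 1) - 1 := digit_of_lt_zeta k.succ_pos h
    have hle : q d k ≤ q d k * d (k + 1) := Nat.le_mul_of_pos_right _ (hd.d_pos _)
    have := hd.q_pos k
    rw [q_succ, Nat.mod_mul, ih (by omega), hdig, Nat.mul_sub_one]
    omega

theorem q_sub_one_le (hd : IsCantorBase d) {n k : ℕ} (h : k < zeta d n) : q d k - 1 ≤ n :=
  hd.mod_q_of_lt_zeta h ▸ Nat.mod_le n _

theorem sub_q_sub_one_eq (hd : IsCantorBase d) {n k : ℕ} (h : k < zeta d n) :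
    n - (q d k - 1) = q d k * (n / q d k) := by
  have := Nat.div_add_mod n (q d k)
  rw [hd.mod_q_of_lt_zeta h] at this
  omega

theorem succ_eq_q_mul (hd : IsCantorBase d) {n k : ℕ} (h : k < zeta d n) :
    n + 1 = q d k * (n / q d k + 1) := by
  have := Nat.div_add_mod n (q d k)
  have := hd.q_pos k
  rw [hd.mod_q_of_lt_zeta h] at *
  rw [Nat.mul_succ]
  omega

theorem digit_q_mul_of_le (hd : IsCantorBase d) {k j : ℕ} (N : ℕ) (hj : 1 ≤ j)
    (hjk : j ≤ k) :
    digit d (q d k * N) j = 0 := by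
  have hq : q d k = q d (j - 1) * ∏ i ∈ Ico j (k + 1), d i := by
    have := q_eq_mul_prod_Ico d (show j - 1 ≤ k by omega)
    rwa [show j - 1 + 1 = j by omega] at this
  rw [digit, hq, mul_assoc, Nat.mul_div_cancel_left _ (hd.q_pos _)]
  exact Nat.mod_eq_zero_of_dvd ((dvd_prod_of_mem d (by simp; omega)).mul_right N)

theorem digit_q_mul_add (hd : IsCantorBase d) {k j N c : ℕ} (hc : c < q d k) (hkj : k < j) :
    digit d (q d k * N + c) j = digit d (q d k * N) j := by
  have hq : q d (j - 1) = q d k * ∏ i ∈ Ico (k + 1) j, d i := by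
    have := q_eq_mul_prod_Ico d (show k ≤ j - 1 by omega)
    rwa [show j - 1 + 1 = j by omega] at this
  have hk := hd.q_pos k
  simp only [digit, hq, ← Nat.div_div_eq_div_mul, Nat.mul_add_div hk, Nat.div_eq_of_lt hc,
    add_zero, Nat.mul_div_cancel_left _ hk]

theorem digit_q_mul_div (hd : IsCantorBase d) {n k j : ℕ} (hkj : k < j) :
    digit d (q d k * (n / q d k)) j = digit d n j := by
  conv_rhs => rw [← Nat.div_add_mod n (q d k)]
  exact (hd.digit_q_mul_add (Nat.mod_lt _ (hd.q_pos k)) hkj).symm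

theorem digit_sub_of_le (hd : IsCantorBase d) {n r j : ℕ} (hr : r < zeta d n) (hj : 1 ≤ j)
    (hjr : j ≤ r) : digit d (n - (q d r - 1)) j = 0 := by
  rw [hd.sub_q_sub_one_eq hr]
  exact hd.digit_q_mul_of_le _ hj hjr

theorem digit_sub_of_lt (hd : IsCantorBase d) {n r j : ℕ} (hr : r < zeta d n) (hrj : r < j) :
    digit d (n - (q d r - 1)) j = digit d n j := by
  rw [hd.sub_q_sub_one_eq hr]
  exact hd.digit_q_mul_div hrj

theorem digit_zeta_lt (hd : IsCantorBase d) {n k : ℕ} (hk : zeta d n = k + 1) :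
    n / q d k % d (k + 1) + 1 < d (k + 1) := by
  have hne : digit d n (k + 1) ≠ d (k + 1) - 1 := hk ▸ (hd.zeta_mem n).2
  have hlt : digit d n (k + 1) < d (k + 1) := Nat.mod_lt _ (hd.d_pos _)
  show digit d n (k + 1) + 1 < d (k + 1)
  omega

theorem digit_succ_of_le (hd : IsCantorBase d) {n k j : ℕ} (hk : zeta d n = k + 1) (hj : 1 ≤ j)
    (hjk : j ≤ k) : digit d (n + 1) j = 0 := by
  rw [hd.succ_eq_q_mul (show k < zeta d n by omega)]
  exact hd.digit_q_mul_of_le _ hj hjk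

theorem digit_succ_zeta (hd : IsCantorBase d) {n k : ℕ} (hk : zeta d n = k + 1) :
    digit d (n + 1) (k + 1) = digit d n (k + 1) + 1 := by
  have hlt := hd.digit_zeta_lt hk
  show (n + 1) / q d k % d (k + 1) = n / q d k % d (k + 1) + 1
  rw [hd.succ_eq_q_mul (show k < zeta d n by omega), Nat.mul_div_cancel_left _ (hd.q_pos k),
    Nat.add_mod_of_add_mod_lt] <;> rw [Nat.mod_eq_of_lt (a := 1) (by omega)]
  exact hlt

theorem digit_succ_of_lt (hd : IsCantorBase d) {n k j : ℕ} (hk : zeta d n = k + 1)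
    (hkj : k + 1 < j) : digit d (n + 1) j = digit d n j := by
  have hc : n % q d (k + 1) + 1 < q d (k + 1) := by
    have hlt := hd.digit_zeta_lt hk
    rw [q_succ, Nat.mod_mul, hd.mod_q_of_lt_zeta (show k < zeta d n by omega)]
    generalize n / q d k % d (k + 1) = a at hlt ⊢
    obtain ⟨Q, hQ⟩ := Nat.exists_eq_add_one.mpr (hd.q_pos k)
    rw [hQ, Nat.add_sub_cancel]
    nlinarith [Nat.mul_le_mul_left (Q + 1) hlt]
  have hsplit : n + 1 = q d (k + 1) * (n / q d (k + 1)) + (n % q d (k + 1) + 1) := by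
    have := Nat.div_add_mod n (q d (k + 1))
    omega
  rw [hsplit, hd.digit_q_mul_add hc hkj, hd.digit_q_mul_div hkj]

theorem digit_q_succ (hd : IsCantorBase d) (r : ℕ) : digit d (q d r) (r + 1) = 1 := by
  have := hd.two_le (r + 1) r.succ_pos
  show q d r / q d r % d (r + 1) = 1
  rw [Nat.div_self (hd.q_pos r), Nat.mod_eq_of_lt (by omega)]

theorem digit_q_of_le (hd : IsCantorBase d) {r j : ℕ} (hj : 1 ≤ j) (hjr : j ≤ r) :
    digit d (q d r) j = 0 := by
  simpa using hd.digit_q_mul_of_le 1 hj hjr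

theorem sum_Icc_pred_mul_q (hd : IsCantorBase d) (r : ℕ) :
    ∑ j ∈ Icc 1 r, (d j - 1) * q d (j - 1) = q d r - 1 := by
  induction r with
  | zero => simp [hd.q_zero]
  | succ r ih =>
    rw [sum_Icc_succ_top (by omega), ih, Nat.add_sub_cancel, q_succ, Nat.sub_mul]
    have := hd.q_pos r
    have : q d r ≤ d (r + 1) * q d r := Nat.le_mul_of_pos_left _ (hd.d_pos _)
    rw [mul_comm (q d r)]
    omega

end IsCantorBase

lemma s_succ (d : ℕ → ℕ) (p : ℕ → ℝ) (n : ℕ) :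
    s d p n (n + 1) = ∏ j ∈ Icc 1 (zeta d n), p j := by
  rw [s, if_pos rfl]

section RowOfS

variable {d : ℕ → ℕ} (hd : IsCantorBase d) (p : ℕ → ℝ)
include hd

theorem s_sub_q_sub_one {n r : ℕ} (hr : r < zeta d n) :
    s d p n (n - (q d r - 1)) = (1 - p (r + 1)) * ∏ j ∈ Icc 1 r, p j := by
  rcases Nat.eq_zero_or_pos r with rfl | hr0
  · simp [s, hd.q_zero]
  have h2 : 1 < q d r := hd.q_zero ▸ hd.q_strictMono hr0
  have hle := hd.q_sub_one_le hr
  have hex : ∃ r', 1 ≤ r' ∧ r' + 1 ≤ zeta d n ∧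
      n = n - (q d r - 1) + ∑ j ∈ Icc 1 r', (d j - 1) * q d (j - 1) :=
    ⟨r, hr0, hr, by rw [hd.sum_Icc_pred_mul_q]; omega⟩
  rw [s, if_neg (by omega), if_neg (by omega), dif_pos hex]
  obtain ⟨-, -, h3⟩ := hex.choose_spec
  rw [hd.sum_Icc_pred_mul_q] at h3
  have := hd.q_pos hex.choose
  rw [hd.q_strictMono.injective (show q d hex.choose = q d r by omega)]

theorem s_eq_zero {n m : ℕ} (h1 : m ≠ n + 1) (h2 : ∀ r < zeta d n, m ≠ n - (q d r - 1)) :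
    s d p n m = 0 := by
  have hmn : m ≠ n := by simpa [hd.q_zero] using h2 0 (hd.zeta_mem n).1
  rw [s, if_neg h1, if_neg hmn, dif_neg]
  rintro ⟨r, hr1, hr2, hr3⟩
  rw [hd.sum_Icc_pred_mul_q] at hr3
  have : 1 < q d r := hd.q_zero ▸ hd.q_strictMono hr1
  exact h2 r (by omega) (by omega)

theorem tsum_s_mul (v : ℕ → ℂ) (n : ℕ) :
    ∑' m, (s d p n m : ℂ) * v m
      = (∏ j ∈ Icc 1 (zeta d n), (p j : ℂ)) * v (n + 1)
        + ∑ r ∈ range (zeta d n),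
            (1 - (p (r + 1) : ℂ)) * (∏ j ∈ Icc 1 r, (p j : ℂ)) * v (n - (q d r - 1)) := by
  classical
  have hinj : Set.InjOn (fun r => n - (q d r - 1)) (range (zeta d n)) := by
    intro r₁ h₁ r₂ h₂ heq
    have := hd.q_sub_one_le (mem_range.1 h₁)
    have := hd.q_sub_one_le (mem_range.1 h₂)
    have := hd.q_pos r₁
    have := hd.q_pos r₂
    exact hd.q_strictMono.injective (by simp only at heq; omega)
  have hsucc : n + 1 ∉ (range (zeta d n)).image fun r => n - (q d r - 1) := by
    simp only [mem_image, mem_range, not_exists, not_and]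
    omega
  rw [tsum_eq_sum (s := insert (n + 1) ((range (zeta d n)).image fun r => n - (q d r - 1))),
    sum_insert hsucc, sum_image hinj, s_succ]
  · push_cast
    congr 1
    refine sum_congr rfl fun r hr => ?_
    rw [s_sub_q_sub_one hd p (mem_range.1 hr)]
    push_cast
    ring
  · intro m hm
    simp only [mem_insert, mem_image, mem_range, not_or, not_exists, not_and] at hm
    rw [s_eq_zero hd p hm.1 fun r hr h => hm.2 r hr h.symm, Complex.ofReal_zero, zero_mul]

end RowOfS

section Eigenfunction

variable {d : ℕ → ℕ} {p : ℕ → ℝ} {lam : ℂ}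

lemma ftil_succ (k : ℕ) : ftil d p (k + 1) lam = iota d p lam (k + 1) ^ d (k + 1) := rfl

lemma p_mul_iota_succ (k : ℕ) (hp : p (k + 1) ≠ 0) :
    (p (k + 1) : ℂ) * iota d p lam (k + 1) = ftil d p k lam - (1 - p (k + 1)) :=
  mul_div_cancel₀ _ (Complex.ofReal_ne_zero.mpr hp)

/- The eigen-equation of `vlam` at `n = q_k - 1`; it telescopes because
`p_{r+1} ι_λ(r+1) + (1 - p_{r+1}) = ι_λ(r) ^ d_r`. -/
theorem lam_mul_prod_iota_pow (hd : ∀ j, 0 < d j) (hp : ∀ j, 1 ≤ j → p j ≠ 0) (k : ℕ) :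
    lam * ∏ j ∈ Ioc 0 k, iota d p lam j ^ (d j - 1)
      = (∏ j ∈ Icc 1 (k + 1), (p j : ℂ)) * iota d p lam (k + 1)
        + ∑ r ∈ range (k + 1), (1 - (p (r + 1) : ℂ)) * (∏ j ∈ Icc 1 r, (p j : ℂ))
            * ∏ j ∈ Ioc r k, iota d p lam j ^ (d j - 1) := by
  induction k with
  | zero =>
    have h1 : (p 1 : ℂ) * iota d p lam 1 = lam - (1 - p 1) := p_mul_iota_succ 0 (hp 1 le_rfl)
    simp
    linear_combination -h1
  | succ k ih =>
    have h1 := p_mul_iota_succ (d := d) (lam := lam) (k + 1) (hp _ k.succ.succ_pos)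
    rw [ftil_succ] at h1
    have hpow : iota d p lam (k + 1) ^ d (k + 1)
        = iota d p lam (k + 1) ^ (d (k + 1) - 1) * iota d p lam (k + 1) := by
      rw [← pow_succ, Nat.sub_add_cancel (hd _)]
    have hsum : ∑ r ∈ range (k + 1), (1 - (p (r + 1) : ℂ)) * (∏ j ∈ Icc 1 r, (p j : ℂ))
          * ∏ j ∈ Ioc r (k + 1), iota d p lam j ^ (d j - 1)
        = (∑ r ∈ range (k + 1), (1 - (p (r + 1) : ℂ)) * (∏ j ∈ Icc 1 r, (p j : ℂ))
          * ∏ j ∈ Ioc r k, iota d p lam j ^ (d j - 1))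
          * iota d p lam (k + 1) ^ (d (k + 1) - 1) := by
      rw [sum_mul]
      refine sum_congr rfl fun r hr => ?_
      rw [prod_Ioc_succ_top (mem_range_succ_iff.1 hr)]
      ring
    rw [prod_Ioc_succ_top (Nat.zero_le k), ← mul_assoc, ih, sum_range_succ _ (k + 1), Ioc_self,
      prod_empty, mul_one, hsum, prod_Icc_succ_top (show 1 ≤ k + 2 by omega)]
    linear_combination (∏ j ∈ Icc 1 (k + 1), (p j : ℂ)) * (-hpow - h1)

theorem vlam_eq_prod (hd : IsCantorBase d) {n K : ℕ} (hK : n < q d K) :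
    vlam d p lam n = ∏ j ∈ Ioc 0 K, iota d p lam j ^ digit d n j := by
  have hsupp : (Function.mulSupport fun r => iota d p lam (r + 1) ^ digit d n (r + 1))
      ⊆ range K := by
    intro r hr
    by_contra h
    have hKr : K ≤ r := by simpa using h
    refine hr ?_
    simp only
    rw [digit_eq_zero_of_lt (j := r + 1) (hK.trans_le (hd.q_strictMono.monotone hKr)), pow_zero]
  rw [vlam, finprod_eq_prod_of_mulSupport_subset _ hsupp, show Ioc 0 K = Ico 1 (K + 1) from rfl,
    prod_Ico_eq_prod_range]
  simp [add_comm]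

theorem vlam_zero (hd : IsCantorBase d) : vlam d p lam 0 = 1 := by
  simp [vlam_eq_prod hd (hd.q_pos 0)]

theorem vlam_q (hd : IsCantorBase d) (r : ℕ) : vlam d p lam (q d r) = iota d p lam (r + 1) := by
  rw [vlam_eq_prod hd (hd.q_strictMono r.lt_succ_self), prod_Ioc_succ_top (Nat.zero_le r),
    hd.digit_q_succ, pow_one, prod_eq_one, one_mul]
  intro j hj
  rw [hd.digit_q_of_le (mem_Ioc.1 hj).1 (mem_Ioc.1 hj).2, pow_zero]

theorem vlam_eq_mul_of_digit_eq (hd : IsCantorBase d) {n n' m K : ℕ} (hn' : n' < q d K)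
    (hmK : m ≤ K) (h : ∀ j, m < j → digit d n' j = digit d n j) :
    vlam d p lam n' = (∏ j ∈ Ioc 0 m, iota d p lam j ^ digit d n' j)
      * ∏ j ∈ Ioc m K, iota d p lam j ^ digit d n j := by
  rw [vlam_eq_prod hd hn', ← prod_Ioc_consecutive _ (Nat.zero_le m) hmK]
  exact congrArg _ (prod_congr rfl fun j hj => by rw [h j (mem_Ioc.1 hj).1])

theorem tsum_s_mul_vlam (hd : IsCantorBase d) (hp : ∀ j, 1 ≤ j → p j ≠ 0) (n : ℕ) :
    ∑' m, (s d p n m : ℂ) * vlam d p lam m = lam * vlam d p lam n := by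
  obtain ⟨k, hk⟩ : ∃ k, zeta d n = k + 1 := Nat.exists_eq_add_one.mpr (hd.zeta_mem n).1
  have hkn : k + 1 ≤ n + 1 := hk ▸ hd.zeta_le_succ n
  have hK : ∀ n' ≤ n + 1, n' < q d (n + 1) := fun n' h => h.trans_lt (hd.lt_q_self _)
  -- `n + 1` and the `n - (q_r - 1)` have the digits of `n` above `ζ_n = k + 1`, and at `ζ_n`
  -- up to the carry into `n + 1`; `A` is the contribution of these digits to `vlam d p lam n`.
  set A := iota d p lam (k + 1) ^ digit d n (k + 1)
    * ∏ j ∈ Ioc (k + 1) (n + 1), iota d p lam j ^ digit d n j with hA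
  have hsucc : vlam d p lam (n + 1) = iota d p lam (k + 1) * A := by
    rw [vlam_eq_mul_of_digit_eq hd (hK _ le_rfl) hkn fun j hj => hd.digit_succ_of_lt hk hj,
      prod_Ioc_succ_top (Nat.zero_le k), hd.digit_succ_zeta hk, prod_eq_one, pow_succ]
    · ring
    intro j hj
    rw [hd.digit_succ_of_le hk (mem_Ioc.1 hj).1 (mem_Ioc.1 hj).2, pow_zero]
  have hsub : ∀ r ≤ k, vlam d p lam (n - (q d r - 1))
      = (∏ j ∈ Ioc r k, iota d p lam j ^ (d j - 1)) * A := by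
    intro r hrk
    have hr : r < zeta d n := by omega
    rw [vlam_eq_mul_of_digit_eq hd (hK _ (by omega)) hkn
        fun j hj => hd.digit_sub_of_lt hr (by omega),
      prod_Ioc_succ_top (Nat.zero_le k), hd.digit_sub_of_lt hr (by omega),
      ← prod_Ioc_consecutive _ (Nat.zero_le r) hrk, prod_eq_one, one_mul, hA, mul_assoc]
    · refine congrArg (· * _) (prod_congr rfl fun j hj => ?_)
      rw [hd.digit_sub_of_lt hr (mem_Ioc.1 hj).1,
        digit_of_lt_zeta (by have := (mem_Ioc.1 hj).1; omega) (by have := (mem_Ioc.1 hj).2; omega)]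
    intro j hj
    rw [hd.digit_sub_of_le hr (mem_Ioc.1 hj).1 (mem_Ioc.1 hj).2, pow_zero]
  have hself : vlam d p lam n = (∏ j ∈ Ioc 0 k, iota d p lam j ^ (d j - 1)) * A := by
    simpa [hd.q_zero] using hsub 0 (Nat.zero_le k)
  rw [tsum_s_mul hd p, hk, hsucc, hself, ← mul_assoc lam, lam_mul_prod_iota_pow hd.d_pos hp k,
    add_mul, sum_mul]
  congr 1
  · ring
  · exact sum_congr rfl fun r hr => by rw [hsub r (mem_range_succ_iff.1 hr)]; ring

theorem eq_mul_vlam_of_eigen (hd : IsCantorBase d) (hp : ∀ j, 1 ≤ j → p j ≠ 0) {v : ℕ → ℂ}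
    (heig : ∀ n, ∑' m, (s d p n m : ℂ) * v m = lam * v n) (n : ℕ) :
    v n = v 0 * vlam d p lam n := by
  induction n using Nat.strong_induction_on with
  | _ n ih =>
    rcases n with _ | n
    · rw [vlam_zero hd, mul_one]
    have hP : (∏ j ∈ Icc 1 (zeta d n), (p j : ℂ)) ≠ 0 :=
      prod_ne_zero_iff.mpr fun j hj => Complex.ofReal_ne_zero.mpr (hp j (mem_Icc.1 hj).1)
    have hv := heig n
    have hw := tsum_s_mul_vlam hd hp (lam := lam) n
    rw [tsum_s_mul hd] at hv hw
    have hsum : ∑ r ∈ range (zeta d n),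
          (1 - (p (r + 1) : ℂ)) * (∏ j ∈ Icc 1 r, (p j : ℂ)) * v (n - (q d r - 1))
        = v 0 * ∑ r ∈ range (zeta d n), (1 - (p (r + 1) : ℂ)) * (∏ j ∈ Icc 1 r, (p j : ℂ))
          * vlam d p lam (n - (q d r - 1)) := by
      rw [mul_sum]
      exact sum_congr rfl fun r _ => by rw [ih _ (by omega)]; ring
    apply mul_left_cancel₀ hP
    linear_combination hv - v 0 * hw - hsum + lam * ih n (by omega)

theorem tendsto_p_one_of_tendsto_iota (hd : ∀ j, 0 < d j)
    (hp : ∀ j, 1 ≤ j → p j ∈ Set.Ioc (0 : ℝ) 1) (h : Tendsto (iota d p lam) atTop (𝓝 0)) :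
    Tendsto p atTop (𝓝 1) := by
  have h1 := tendsto_zero_iff_norm_tendsto_zero.1 ((tendsto_add_atTop_iff_nat 1).2 h)
  have hftil : Tendsto (fun k => ftil d p (k + 1) lam) atTop (𝓝 0) := by
    refine squeeze_zero_norm' ?_ h1
    filter_upwards [h1.eventually (gt_mem_nhds zero_lt_one)] with k hk
    rw [ftil_succ, norm_pow]
    exact pow_le_of_le_one (norm_nonneg _) hk.le (hd _).ne'
  have hpι : Tendsto (fun k => (p (k + 2) : ℂ) * iota d p lam (k + 2)) atTop (𝓝 0) := by
    refine squeeze_zero_norm (fun k => ?_) ((tendsto_add_atTop_iff_nat 1).2 h1)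
    rw [norm_mul, Complex.norm_real, Real.norm_of_nonneg (hp _ (by omega)).1.le]
    exact mul_le_of_le_one_left (norm_nonneg _) (hp _ (by omega)).2
  have hc : Tendsto (fun k => (p (k + 2) : ℂ)) atTop (𝓝 1) := by
    have := (tendsto_const_nhds (x := (1 : ℂ))).sub (hftil.sub hpι)
    rw [sub_zero, sub_zero] at this
    refine this.congr fun k => ?_
    rw [p_mul_iota_succ (k + 1) (hp _ (by omega)).1.ne']
    ring
  rw [← tendsto_add_atTop_iff_nat 2]
  simpa [Function.comp_def] using (Complex.continuous_re.tendsto 1).comp hc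

theorem eq_zero_of_eigen (hd : IsCantorBase d) (hp : ∀ j, 1 ≤ j → p j ∈ Set.Ioc (0 : ℝ) 1)
    (hp1 : ¬ Tendsto p atTop (𝓝 1)) {v : ℕ → ℂ}
    (heig : ∀ n, ∑' m, (s d p n m : ℂ) * v m = lam * v n) (hv : Tendsto v atTop (𝓝 0)) :
    v = 0 := by
  have hform := eq_mul_vlam_of_eigen hd (fun j hj => (hp j hj).1.ne') heig
  by_contra hne
  have hv0 : v 0 ≠ 0 := fun h0 => hne (funext fun n => by rw [hform n, h0, zero_mul]; rfl)
  have hι : Tendsto (fun r => iota d p lam (r + 1)) atTop (𝓝 0) := by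
    have := (hv.comp hd.q_strictMono.tendsto_atTop).const_mul (v 0)⁻¹
    rw [mul_zero] at this
    refine this.congr fun r => ?_
    rw [Function.comp_apply, hform (q d r), vlam_q hd, inv_mul_cancel_left₀ hv0]
  exact hp1 (tendsto_p_one_of_tendsto_iota hd.d_pos hp ((tendsto_add_atTop_iff_nat 1).1 hι))

end Eigenfunction

/-- if `(p_j)` does not converge to `1`, then `S` has no eigenvalues
on `c₀` nor on `l^α` for `1 ≤ α < ∞`. -/
theorem stmt11 (d : ℕ → ℕ) (p : ℕ → ℝ)
    (hd0 : d 0 = 1) (hd : ∀ j, 1 ≤ j → 2 ≤ d j)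
    (hp : ∀ j, 1 ≤ j → p j ∈ Set.Ioc (0 : ℝ) 1)
    (hp1 : ¬ Filter.Tendsto (fun j => p j) Filter.atTop (nhds (1 : ℝ)))
    (α : ℝ≥0∞) [Fact (1 ≤ α)] (hα : α ≠ ⊤)
    (T0 : C₀(ℕ, ℂ) →L[ℂ] C₀(ℕ, ℂ))
    (hT0 : ∀ (w : C₀(ℕ, ℂ)) (n : ℕ), T0 w n = ∑' m : ℕ, (s d p n m : ℂ) * w m)
    (Ta : lp (fun _ : ℕ => ℂ) α →L[ℂ] lp (fun _ : ℕ => ℂ) α)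
    (hTa : ∀ (w : lp (fun _ : ℕ => ℂ) α) (n : ℕ),
      Ta w n = ∑' m : ℕ, (s d p n m : ℂ) * w m) :
    (¬ ∃ (lam : ℂ) (v : C₀(ℕ, ℂ)), v ≠ 0 ∧ T0 v = lam • v) ∧
      ¬ ∃ (lam : ℂ) (v : lp (fun _ : ℕ => ℂ) α), v ≠ 0 ∧ Ta v = lam • v := by
  have hdp : IsCantorBase d := ⟨hd0, hd⟩
  have hα0 : α ≠ 0 := (zero_lt_one.trans_le (Fact.out : 1 ≤ α)).ne'
  refine ⟨fun ⟨lam, v, hv, heq⟩ => hv ?_, fun ⟨lam, v, hv, heq⟩ => hv ?_⟩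
  · refine DFunLike.coe_injective (eq_zero_of_eigen hdp hp hp1 (lam := lam)
      (fun n => by rw [← hT0, heq]; rfl) ?_)
    simpa [cocompact_eq_atTop] using zero_at_infty v
  · refine lp.ext (eq_zero_of_eigen hdp hp hp1 (lam := lam)
      (fun n => by rw [← hTa, heq]; rfl) ?_)
    rw [← Nat.cofinite_eq_atTop]
    exact tendsto_zero_iff_norm_tendsto_zero.2 ((lp.memℓp v).tendsto_norm_cofinite_zero hα0 hα)

end AMFC
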